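/- arXiv:1507.07115 — 5 statements merged into one kernel-verified Lean document; each statement's English description precedes it below -/
import Mathlib

section
/- Let C be an n×n positive definite Hermitian matrix, h ∈ C^n, and γ > 0. The matrix A = C - (1/γ) h h^H is singular (has zero as an eigenvalue) and positive semidefinite if and only if h^H C^{-1} h = γ. -/
/-!
By the matrix determinant lemma, `det A = det C * (1 - γ⁻¹ * hᴴ C⁻¹ h)`, so `A` is singular exactly
when `hᴴ C⁻¹ h = γ`. Both `A` and `γ - hᴴ C⁻¹ h` are Schur complements of the Hermitian block
matrix `[[C, h], [hᴴ, γ]]`, so `A` is positive semidefinite exactly when `hᴴ C⁻¹ h ≤ γ`.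
-/

open Matrix ComplexOrder

namespace Matrix

variable {n K : Type*} [Fintype n] [DecidableEq n] [Field K]

theorem det_sub_smul_vecMulVec {C : Matrix n n K} (hC : IsUnit C.det) (a : K) (u v : n → K) :
    (C - a • vecMulVec u v).det = C.det * (1 - a * (v ⬝ᵥ C⁻¹ *ᵥ u)) := by
  rw [sub_eq_add_neg, ← neg_smul, ← smul_vecMulVec, vecMulVec_eq Unit,
    det_add_replicateCol_mul_replicateRow hC, Matrix.mul_assoc, ← replicateCol_mulVec,
    det_unique (1 + _ : Matrix Unit Unit K), add_apply, replicateRow_mul_replicateCol_apply,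
    one_apply_eq, mulVec_smul, dotProduct_smul, smul_eq_mul, neg_mul, ← sub_eq_add_neg]

variable [PartialOrder K] [StarRing K] [StarOrderedRing K]

theorem posSemidef_sub_inv_smul_vecMulVec_iff {C : Matrix n n K} (hC : C.PosDef) (h : n → K)
    {γ : K} (hγ : 0 < γ) :
    (C - γ⁻¹ • vecMulVec h (star h)).PosSemidef ↔ star h ⬝ᵥ C⁻¹ *ᵥ h ≤ γ := by
  let D : Matrix Unit Unit K := diagonal fun _ ↦ γ
  have hD : D.PosDef := posDef_diagonal_iff.2 fun _ ↦ hγ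
  let := hC.isUnit.invertible
  let := hD.isUnit.invertible
  have hB : replicateCol Unit h * D⁻¹ * (replicateCol Unit h)ᴴ = γ⁻¹ • vecMulVec h (star h) := by
    ext i j
    simp [D, mul_apply, vecMulVec_apply, mul_comm (h _) γ⁻¹, mul_assoc]
  have hS : D - (replicateCol Unit h)ᴴ * C⁻¹ * replicateCol Unit h =
      diagonal fun _ ↦ γ - star h ⬝ᵥ C⁻¹ *ᵥ h := by
    rw [conjTranspose_replicateCol, Matrix.mul_assoc, ← replicateCol_mulVec,
      replicateRow_mul_replicateCol]
    ext i j
    simp [D]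
  rw [← hB, ← PosDef.fromBlocks₂₂ C _ hD, PosDef.fromBlocks₁₁ _ D hC, hS, posSemidef_diagonal_iff]
  simp [sub_nonneg]

end Matrix

theorem stmt_1_general {n : ℕ} (C : Matrix (Fin n) (Fin n) ℂ) (hC : C.PosDef)
    (h : Fin n → ℂ) (γ : ℝ) (hγ : 0 < γ)
    (A : Matrix (Fin n) (Fin n) ℂ)
    (hAdef : A = C - ((γ : ℂ)⁻¹) • vecMulVec h (star h)) :
    (A.det = 0 ∧ A.PosSemidef) ↔ star h ⬝ᵥ C⁻¹.mulVec h = (γ : ℂ) := by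
  have hγ' : (0 : ℂ) < γ := Complex.zero_lt_real.2 hγ
  have hdetC : C.det ≠ 0 := hC.det_pos.ne'
  rw [hAdef, det_sub_smul_vecMulVec hdetC.isUnit, posSemidef_sub_inv_smul_vecMulVec_iff hC h hγ',
    mul_eq_zero, or_iff_right hdetC, sub_eq_zero, eq_comm, inv_mul_eq_one₀ hγ'.ne']
  exact ⟨fun hA ↦ hA.1.symm, fun hs ↦ ⟨hs.symm, hs.le⟩⟩

theorem stmt_1 {n : ℕ} (C : Matrix (Fin n) (Fin n) ℂ) (hC : C.PosDef)
    (h : Fin n → ℂ) (hh : h ≠ 0) (γ : ℝ) (hγ : 0 < γ)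
    (A : Matrix (Fin n) (Fin n) ℂ)
    (hAdef : A = C - ((γ : ℂ)⁻¹) • vecMulVec h (star h)) :
    (A.det = 0 ∧ A.PosSemidef) ↔ star h ⬝ᵥ C⁻¹.mulVec h = (γ : ℂ) :=
  stmt_1_general C hC h γ hγ A hAdef
end

section
/- Fix positive constants γ_k and Hermitian positive semidefinite rank-one matrices M_k = g_k g_k^H (g_k ∈ C^n nonzero), k = 1,…,K. Define f : R_{≥0}^K → R^K by f_k(λ) = (γ_k/(1+γ_k)) · 1/(g_k^H (I + Σ_j λ_j M_j)^{-1} g_k). Then f is a standard function: (i) f(λ) > 0 componentwise; (ii) f is monotone: λ ≥ λ' implies f(λ) ≥ f(λ'); (iii) for every α > 1, α f(λ) ≥ f(α λ) componentwise. -/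
/-!
Inversion is operator antitone on positive definite matrices, and
`A(λ) = I + ∑ⱼ λⱼ gⱼ gⱼᴴ` is monotone in `λ` with `A(αλ) ≤ α A(λ)` for `α ≥ 1` (the difference is
`(α - 1) I`). Hence `gₖᴴ A(λ)⁻¹ gₖ` is positive and antitone in `λ`, and
`gₖᴴ A(αλ)⁻¹ gₖ ≥ α⁻¹ gₖᴴ A(λ)⁻¹ gₖ`; `fₖ` is a positive multiple of its reciprocal.
-/

open Matrix ComplexOrder
open scoped MatrixOrder Matrix.Norms.L2Operator

namespace Matrix

variable {m : Type*} [Fintype m]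

theorem PosDef.inv_le_inv [DecidableEq m] {A B : Matrix m m ℂ} (hA : A.PosDef) (hAB : A ≤ B) :
    B⁻¹ ≤ A⁻¹ := by
  rw [nonsing_inv_eq_ringInverse, nonsing_inv_eq_ringInverse]
  exact CStarAlgebra.ringInverse_le_ringInverse hAB (isStrictlyPositive_iff_posDef.mpr hA)

theorem re_dotProduct_mulVec_le_of_le {A B : Matrix m m ℂ} (hAB : A ≤ B) (x : m → ℂ) :
    (star x ⬝ᵥ A *ᵥ x).re ≤ (star x ⬝ᵥ B *ᵥ x).re := by
  have := Complex.re_le_re ((le_iff.mp hAB).dotProduct_mulVec_nonneg x)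
  rwa [sub_mulVec, dotProduct_sub, Complex.sub_re, Complex.zero_re, sub_nonneg] at this

theorem re_dotProduct_inv_mulVec_pos [DecidableEq m] {A : Matrix m m ℂ} (hA : A.PosDef)
    {x : m → ℂ} (hx : x ≠ 0) : 0 < (star x ⬝ᵥ A⁻¹ *ᵥ x).re :=
  (Complex.pos_iff.mp (hA.inv.dotProduct_mulVec_pos hx)).1

theorem re_dotProduct_inv_mulVec_le_of_le [DecidableEq m] {A B : Matrix m m ℂ} (hA : A.PosDef)
    (hAB : A ≤ B) (x : m → ℂ) : (star x ⬝ᵥ B⁻¹ *ᵥ x).re ≤ (star x ⬝ᵥ A⁻¹ *ᵥ x).re :=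
  re_dotProduct_mulVec_le_of_le (hA.inv_le_inv hAB) x

theorem re_dotProduct_real_smul_inv_mulVec [DecidableEq m] {A : Matrix m m ℂ}
    (hA : IsUnit A) {c : ℝ} (hc : c ≠ 0) (x : m → ℂ) :
    (star x ⬝ᵥ ((c : ℂ) • A)⁻¹ *ᵥ x).re = c⁻¹ * (star x ⬝ᵥ A⁻¹ *ᵥ x).re := by
  have hinv := inv_smul' A (Units.mk0 (c : ℂ) (by exact_mod_cast hc))
    ((isUnit_iff_isUnit_det A).mp hA)
  rw [Units.smul_def, Units.smul_def, Units.val_inv_eq_inv_val, Units.val_mk0] at hinv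
  rw [hinv, smul_mulVec, dotProduct_smul, smul_eq_mul, ← Complex.ofReal_inv,
    Complex.re_ofReal_mul]

end Matrix

section InterferenceMatrix

variable {ι m : Type*} [Fintype ι] [DecidableEq m]

def interferenceMatrix (g : ι → m → ℂ) (lam : ι → ℝ) : Matrix m m ℂ :=
  1 + ∑ j, (lam j : ℂ) • vecMulVec (g j) (star (g j))

variable (g : ι → m → ℂ)

theorem interferenceMatrix_smul_le {α : ℝ} (hα : 1 ≤ α) (lam : ι → ℝ) :
    interferenceMatrix g (α • lam) ≤ (α : ℂ) • interferenceMatrix g lam := by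
  have : (α : ℂ) • interferenceMatrix g lam - interferenceMatrix g (α • lam)
      = ((α - 1 : ℝ) : ℂ) • 1 := by
    simp only [interferenceMatrix, Pi.smul_apply, smul_eq_mul, smul_add, Finset.smul_sum,
      smul_smul]
    push_cast
    rw [sub_smul, one_smul]
    abel
  rw [le_iff, this]
  exact PosSemidef.one.smul (Complex.zero_le_real.mpr (by linarith))

variable [Fintype m]

theorem interferenceMatrix_posDef {lam : ι → ℝ} (hlam : 0 ≤ lam) :
    (interferenceMatrix g lam).PosDef :=
  PosDef.one.add_posSemidef <| posSemidef_sum _ fun j _ =>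
    (posSemidef_vecMulVec_self_star (g j)).smul (Complex.zero_le_real.mpr (hlam j))

theorem interferenceMatrix_mono : Monotone (interferenceMatrix g) := by
  intro lam' lam h
  unfold interferenceMatrix
  gcongr with j
  · exact (posSemidef_vecMulVec_self_star (g j)).nonneg
  · exact Complex.real_le_real.mpr (h j)

end InterferenceMatrix

theorem stmt_8 {n K : ℕ} (γ : Fin K → ℝ) (hγ : ∀ k, 0 < γ k)
    (g : Fin K → (Fin n → ℂ)) (hg : ∀ k, g k ≠ 0)
    (f : (Fin K → ℝ) → Fin K → ℝ)
    (hf : ∀ lam k, f lam k = (γ k / (1 + γ k)) *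
      ((star (g k) ⬝ᵥ ((1 + ∑ j, (lam j : ℂ) • vecMulVec (g j) (star (g j)))⁻¹).mulVec (g k)).re)⁻¹) :
    (∀ lam : Fin K → ℝ, (∀ j, 0 ≤ lam j) → ∀ k, 0 < f lam k) ∧
    (∀ lam lam' : Fin K → ℝ, (∀ j, 0 ≤ lam' j) → (∀ j, lam' j ≤ lam j) →
      ∀ k, f lam' k ≤ f lam k) ∧
    (∀ lam : Fin K → ℝ, (∀ j, 0 ≤ lam j) → ∀ α : ℝ, 1 < α →
      ∀ k, f (α • lam) k ≤ α * f lam k) := by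
  set q : (Fin K → ℝ) → Fin K → ℝ :=
    fun lam k => (star (g k) ⬝ᵥ (interferenceMatrix g lam)⁻¹ *ᵥ g k).re
  have hfq : ∀ lam k, f lam k = γ k / (1 + γ k) * (q lam k)⁻¹ := hf
  have hc : ∀ k, 0 < γ k / (1 + γ k) := fun k => div_pos (hγ k) (by linarith [hγ k])
  have hq : ∀ lam, 0 ≤ lam → ∀ k, 0 < q lam k := fun lam hlam k =>
    re_dotProduct_inv_mulVec_pos (interferenceMatrix_posDef g hlam) (hg k)
  refine ⟨fun lam hlam k => ?_, fun lam lam' hlam' hle k => ?_, fun lam hlam α hα k => ?_⟩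
  · rw [hfq]
    exact mul_pos (hc k) (inv_pos.mpr (hq lam hlam k))
  · have hqle : q lam k ≤ q lam' k := re_dotProduct_inv_mulVec_le_of_le
      (interferenceMatrix_posDef g hlam') (interferenceMatrix_mono g hle) (g k)
    rw [hfq, hfq]
    gcongr
    exacts [(hc k).le, hq lam (fun j => (hlam' j).trans (hle j)) k]
  · have hqle : α⁻¹ * q lam k ≤ q (α • lam) k := by
      have hαlam : 0 ≤ α • lam := smul_nonneg (by linarith) hlam
      have hle := re_dotProduct_inv_mulVec_le_of_le (interferenceMatrix_posDef g hαlam)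
        (interferenceMatrix_smul_le g hα.le lam) (g k)
      rwa [re_dotProduct_real_smul_inv_mulVec (interferenceMatrix_posDef g hlam).isUnit
        (by positivity)] at hle
    have hq_pos := hq lam hlam k
    calc f (α • lam) k ≤ γ k / (1 + γ k) * (α⁻¹ * q lam k)⁻¹ := by
          rw [hfq]
          gcongr
          exact (hc k).le
      _ = α * f lam k := by rw [hfq, mul_inv, inv_inv]; ring
end

section
/- Let C be Hermitian positive definite, H a matrix, v a vector with H v ≠ 0, and suppose u = α C^{-1} H v for some nonzero scalar α, and u^H (C - (1/γ) H v v^H H^H) u = 0 with γ > 0. Then (1/γ) v^H H^H C^{-1} H v = 1 and consequently (C - (1/γ) H v v^H H^H) u = 0. -/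
/-!
Write `w = H v` and `s = wᴴ C⁻¹ w`, which is positive since `C⁻¹` is positive definite.
The receiver `u = α C⁻¹ w` is mapped by `C - γ⁻¹ w wᴴ` to `α (1 - γ⁻¹ s) w`, so the tight
constraint reads `|α|² s (1 - γ⁻¹ s) = 0`; as `α ≠ 0` and `s ≠ 0` this forces `γ⁻¹ s = 1`,
and then `(C - γ⁻¹ w wᴴ) u = 0` as well.
-/

open Matrix ComplexOrder

namespace Matrix

variable {n R : Type*} [Fintype n] [CommRing R] [StarRing R]

theorem IsHermitian.star_mulVec_dotProduct {A : Matrix n n R} (hA : A.IsHermitian)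
    (w : n → R) : star (A *ᵥ w) ⬝ᵥ w = star w ⬝ᵥ A *ᵥ w := by
  rw [star_mulVec, hA.eq, ← dotProduct_mulVec]

theorem sub_smul_vecMulVec_mulVec_inv_mulVec [DecidableEq n] {C : Matrix n n R}
    (hC : IsUnit C) (c : R) (w : n → R) :
    (C - c • vecMulVec w (star w)) *ᵥ (C⁻¹ *ᵥ w) = (1 - c * (star w ⬝ᵥ C⁻¹ *ᵥ w)) • w := by
  rw [sub_mulVec, smul_mulVec, mulVec_mulVec, mul_nonsing_inv C (C.isUnit_iff_isUnit_det.mp hC),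
    one_mulVec, vecMulVec_mulVec, op_smul_eq_smul, smul_smul, sub_smul, one_smul]

end Matrix

theorem stmt_11_general {N M : ℕ} (C : Matrix (Fin N) (Fin N) ℂ) (hC : C.PosDef)
    (H : Matrix (Fin N) (Fin M) ℂ) (v : Fin M → ℂ) (hHv : H.mulVec v ≠ 0)
    (γ : ℝ) (α : ℂ) (hα : α ≠ 0)
    (u : Fin N → ℂ) (hu : u = α • C⁻¹.mulVec (H.mulVec v))
    (htight : star u ⬝ᵥ (C - ((γ : ℂ)⁻¹) •
      vecMulVec (H.mulVec v) (star (H.mulVec v))).mulVec u = 0) :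
    (γ : ℂ)⁻¹ * (star (H.mulVec v) ⬝ᵥ C⁻¹.mulVec (H.mulVec v)) = 1 ∧
    (C - ((γ : ℂ)⁻¹) • vecMulVec (H.mulVec v) (star (H.mulVec v))).mulVec u = 0 := by
  set w := H *ᵥ v
  set s := star w ⬝ᵥ C⁻¹ *ᵥ w
  have hs : s ≠ 0 := (hC.inv.dotProduct_mulVec_pos hHv).ne'
  have hDu : (C - (γ : ℂ)⁻¹ • vecMulVec w (star w)) *ᵥ u = (α * (1 - (γ : ℂ)⁻¹ * s)) • w := by
    rw [hu, mulVec_smul, sub_smul_vecMulVec_mulVec_inv_mulVec hC.isUnit, smul_smul]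
  have hquad : star α * α * s * (1 - (γ : ℂ)⁻¹ * s) = 0 := by
    rw [hDu, hu, star_smul, smul_dotProduct, dotProduct_smul,
      hC.inv.isHermitian.star_mulVec_dotProduct] at htight
    simpa only [smul_eq_mul, mul_comm, mul_left_comm, mul_assoc] using htight
  have hunit : (γ : ℂ)⁻¹ * s = 1 := by
    have hαs : star α * α * s ≠ 0 := mul_ne_zero (mul_ne_zero (star_ne_zero.mpr hα) hα) hs
    exact (sub_eq_zero.mp ((mul_eq_zero.mp hquad).resolve_left hαs)).symm
  refine ⟨hunit, ?_⟩
  rw [hDu, hunit, sub_self, mul_zero, zero_smul]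

theorem stmt_11 {N M : ℕ} (C : Matrix (Fin N) (Fin N) ℂ) (hC : C.PosDef)
    (H : Matrix (Fin N) (Fin M) ℂ) (v : Fin M → ℂ) (hHv : H.mulVec v ≠ 0)
    (γ : ℝ) (hγ : 0 < γ) (α : ℂ) (hα : α ≠ 0)
    (u : Fin N → ℂ) (hu : u = α • C⁻¹.mulVec (H.mulVec v))
    (htight : star u ⬝ᵥ (C - ((γ : ℂ)⁻¹) •
      vecMulVec (H.mulVec v) (star (H.mulVec v))).mulVec u = 0) :
    (γ : ℂ)⁻¹ * (star (H.mulVec v) ⬝ᵥ C⁻¹.mulVec (H.mulVec v)) = 1 ∧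
    (C - ((γ : ℂ)⁻¹) • vecMulVec (H.mulVec v) (star (H.mulVec v))).mulVec u = 0 :=
  stmt_11_general C hC H v hHv γ α hα u hu htight
end

section
/- Let a_k ∈ C^M, γ_k > 0, c_k > 0 for k=1,…,K. Any two optimal solutions {v_k*} and {v_k**} of the problem min Σ_k ||v_k||² subject to |a_k^H v_k|² ≥ γ_k (Σ_{j≠k} |a_k^H v_j|² + c_k) for all k, satisfy v_k* = e^{iφ_k} v_k** for some phases φ_k ∈ R, for every k. -/
/-!
Rotate each `v' k` by the phase that aligns `a_kᴴ v'_k` with `a_kᴴ v_k`, and let `w` be the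
midpoint of `v` and the rotated `v'`. The signal amplitudes of `w` add coherently while its
interference amplitudes obey the triangle inequality, and `γ (‖b‖² + c) ≤ A²` with `A ≥ 0` is a
second-order cone condition on `(A, b)`, hence convex; so `w` is feasible. By the parallelogram
law the power of `w` is the average power of `v` and `v'` minus `¼ ∑ₖ ‖v k - e^{iφₖ} v' k‖²`, and
optimality of both forces every one of these differences to vanish.
-/

open Matrix ComplexOrder

/-- Cauchy–Schwarz for the vectors `(b, √c)` and `(b', √c)`. -/
theorem sum_mul_add_sq_le {ι : Type*} (s : Finset ι) (b b' : ι → ℝ) {c : ℝ} (hc : 0 ≤ c) :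
    (∑ j ∈ s, b j * b' j + c) ^ 2 ≤ (∑ j ∈ s, b j ^ 2 + c) * (∑ j ∈ s, b' j ^ 2 + c) := by
  have hcs := Finset.sum_mul_sq_le_sq_mul_sq s b b'
  have hamgm : 2 * ∑ j ∈ s, b j * b' j ≤ ∑ j ∈ s, b j ^ 2 + ∑ j ∈ s, b' j ^ 2 := by
    rw [Finset.mul_sum, ← Finset.sum_add_distrib]
    exact Finset.sum_le_sum fun j _ => by nlinarith [sq_nonneg (b j - b' j)]
  nlinarith

theorem sinr_bound_midpoint {ι : Type*} (s : Finset ι) (b b' : ι → ℝ) {γ c A A' : ℝ}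
    (hγ : 0 ≤ γ) (hc : 0 ≤ c) (hA : 0 ≤ A) (hA' : 0 ≤ A')
    (h : γ * (∑ j ∈ s, b j ^ 2 + c) ≤ A ^ 2) (h' : γ * (∑ j ∈ s, b' j ^ 2 + c) ≤ A' ^ 2) :
    γ * (∑ j ∈ s, ((b j + b' j) / 2) ^ 2 + c) ≤ ((A + A') / 2) ^ 2 := by
  set X := ∑ j ∈ s, b j ^ 2 + c
  set Y := ∑ j ∈ s, b' j ^ 2 + c
  set Z := ∑ j ∈ s, b j * b' j + c
  have hY : 0 ≤ γ * Y := mul_nonneg hγ (by positivity)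
  have hexpand : ∑ j ∈ s, ((b j + b' j) / 2) ^ 2 + c = (X + Y + 2 * Z) / 4 := by
    have hsq : ∑ j ∈ s, ((b j + b' j) / 2) ^ 2
        = (∑ j ∈ s, b j ^ 2 + ∑ j ∈ s, b' j ^ 2 + 2 * ∑ j ∈ s, b j * b' j) / 4 := by
      rw [Finset.mul_sum, ← Finset.sum_add_distrib, ← Finset.sum_add_distrib, Finset.sum_div]
      exact Finset.sum_congr rfl fun j _ => by ring
    rw [hsq]
    ring
  have hcross : γ * Z ≤ A * A' := by
    refine le_of_sq_le_sq ?_ (mul_nonneg hA hA')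
    calc (γ * Z) ^ 2 = γ ^ 2 * Z ^ 2 := by ring
      _ ≤ γ ^ 2 * (X * Y) := by gcongr; exact sum_mul_add_sq_le s b b' hc
      _ = (γ * X) * (γ * Y) := by ring
      _ ≤ A ^ 2 * A' ^ 2 := mul_le_mul h h' hY (sq_nonneg A)
      _ = (A * A') ^ 2 := by ring
  rw [hexpand]
  nlinarith [h, h', hcross]

theorem exists_phase_norm_add_eq (z z' : ℂ) :
    ∃ φ : ℝ, ‖z + Complex.exp (φ * Complex.I) * z'‖ = ‖z‖ + ‖z'‖ := by
  refine ⟨z.arg - z'.arg, ?_⟩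
  have hsum : z + Complex.exp ((z.arg - z'.arg : ℝ) * Complex.I) * z'
      = ((‖z‖ + ‖z'‖ : ℝ) : ℂ) * Complex.exp (z.arg * Complex.I) := by
    have hrot : Complex.exp ((z.arg - z'.arg : ℝ) * Complex.I) * Complex.exp (z'.arg * Complex.I)
        = Complex.exp (z.arg * Complex.I) := by
      rw [← Complex.exp_add]; push_cast; ring_nf
    calc z + Complex.exp ((z.arg - z'.arg : ℝ) * Complex.I) * z'
        = ‖z‖ * Complex.exp (z.arg * Complex.I)
          + ‖z'‖ * (Complex.exp ((z.arg - z'.arg : ℝ) * Complex.I)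
            * Complex.exp (z'.arg * Complex.I)) := by
          rw [Complex.norm_mul_exp_arg_mul_I, mul_left_comm, Complex.norm_mul_exp_arg_mul_I]
      _ = _ := by rw [hrot]; push_cast; ring
  rw [hsum, norm_mul, Complex.norm_exp_ofReal_mul_I, mul_one, Complex.norm_real, Real.norm_eq_abs,
    abs_of_nonneg (by positivity)]

theorem star_dotProduct_midpoint {n : Type*} [Fintype n] (x y : n → ℂ) {u : ℂ} (hu : ‖u‖ = 1) :
    star ((2⁻¹ : ℂ) • (x + u • y)) ⬝ᵥ ((2⁻¹ : ℂ) • (x + u • y))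
      = (star x ⬝ᵥ x + star y ⬝ᵥ y) / 2 - star (x - u • y) ⬝ᵥ (x - u • y) / 4 := by
  have hunit : star u * u = 1 := by
    rw [Complex.star_def, Complex.conj_mul', hu]; norm_num
  simp only [star_smul, star_add, star_sub, smul_dotProduct, dotProduct_smul, add_dotProduct,
    dotProduct_add, sub_dotProduct, dotProduct_sub, smul_eq_mul, star_inv₀, star_ofNat]
  linear_combination (star y ⬝ᵥ y) / 2 * hunit

theorem re_star_dotProduct_self_nonneg {n : Type*} [Fintype n] (x : n → ℂ) :
    0 ≤ (star x ⬝ᵥ x).re :=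
  (Complex.nonneg_iff.mp (dotProduct_star_self_nonneg x)).1

theorem re_star_dotProduct_self_eq_zero {n : Type*} [Fintype n] {x : n → ℂ}
    (h : (star x ⬝ᵥ x).re = 0) : x = 0 := by
  have him := (Complex.nonneg_iff.mp (dotProduct_star_self_nonneg x)).2
  exact dotProduct_star_self_eq_zero.mp (Complex.ext h him.symm)

def SINRFeasible {ι n : Type*} [Fintype ι] [DecidableEq ι] [Fintype n]
    (a : ι → n → ℂ) (γ c : ι → ℝ) (v : ι → n → ℂ) : Prop :=
  ∀ k, ‖star (a k) ⬝ᵥ v k‖ ^ 2 ≥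
    γ k * ((∑ j ∈ Finset.univ.erase k, ‖star (a k) ⬝ᵥ v j‖ ^ 2) + c k)

theorem SINRFeasible.midpoint {ι n : Type*} [Fintype ι] [DecidableEq ι] [Fintype n]
    {a : ι → n → ℂ} {γ c : ι → ℝ} {v v' : ι → n → ℂ}
    (hγ : ∀ k, 0 ≤ γ k) (hc : ∀ k, 0 ≤ c k)
    (hv : SINRFeasible a γ c v) (hv' : SINRFeasible a γ c v')
    {u : ι → ℂ} (hu : ∀ k, ‖u k‖ = 1)
    (halign : ∀ k, ‖star (a k) ⬝ᵥ v k + u k * (star (a k) ⬝ᵥ v' k)‖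
      = ‖star (a k) ⬝ᵥ v k‖ + ‖star (a k) ⬝ᵥ v' k‖) :
    SINRFeasible a γ c fun k => (2⁻¹ : ℂ) • (v k + u k • v' k) := by
  intro k
  have hdot : ∀ j, ‖star (a k) ⬝ᵥ ((2⁻¹ : ℂ) • (v j + u j • v' j))‖
      = ‖star (a k) ⬝ᵥ v j + u j * (star (a k) ⬝ᵥ v' j)‖ / 2 := fun j => by
    rw [dotProduct_smul, dotProduct_add, dotProduct_smul, smul_eq_mul, smul_eq_mul, norm_mul,
      norm_inv, Complex.norm_ofNat, inv_mul_eq_div]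
  have hinterference : ∀ j, ‖star (a k) ⬝ᵥ ((2⁻¹ : ℂ) • (v j + u j • v' j))‖
      ≤ (‖star (a k) ⬝ᵥ v j‖ + ‖star (a k) ⬝ᵥ v' j‖) / 2 := fun j => by
    rw [hdot]
    gcongr
    exact (norm_add_le _ _).trans_eq (by rw [norm_mul, hu, one_mul])
  calc γ k * (∑ j ∈ Finset.univ.erase k, ‖star (a k) ⬝ᵥ ((2⁻¹ : ℂ) • (v j + u j • v' j))‖ ^ 2
        + c k)
      ≤ γ k * (∑ j ∈ Finset.univ.erase k,
          ((‖star (a k) ⬝ᵥ v j‖ + ‖star (a k) ⬝ᵥ v' j‖) / 2) ^ 2 + c k) := by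
        gcongr with j
        · exact hγ k
        · exact hinterference j
    _ ≤ ((‖star (a k) ⬝ᵥ v k‖ + ‖star (a k) ⬝ᵥ v' k‖) / 2) ^ 2 :=
        sinr_bound_midpoint _ _ _ (hγ k) (hc k) (norm_nonneg _) (norm_nonneg _) (hv k) (hv' k)
    _ = ‖star (a k) ⬝ᵥ ((2⁻¹ : ℂ) • (v k + u k • v' k))‖ ^ 2 := by rw [hdot, halign]

theorem stmt_16 {M K : ℕ} (a : Fin K → (Fin M → ℂ)) (γ c : Fin K → ℝ)
    (hγ : ∀ k, 0 < γ k) (hc : ∀ k, 0 < c k)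
    (Feas : (Fin K → (Fin M → ℂ)) → Prop)
    (hFeas : ∀ v, Feas v ↔ ∀ k,
      ‖star (a k) ⬝ᵥ v k‖ ^ 2 ≥
        γ k * ((∑ j ∈ Finset.univ.erase k, ‖star (a k) ⬝ᵥ v j‖ ^ 2) + c k))
    (v v' : Fin K → (Fin M → ℂ)) (hv : Feas v) (hv' : Feas v')
    (hopt : ∀ w, Feas w → ∑ k, (star (v k) ⬝ᵥ v k).re ≤ ∑ k, (star (w k) ⬝ᵥ w k).re)
    (hopt' : ∀ w, Feas w → ∑ k, (star (v' k) ⬝ᵥ v' k).re ≤ ∑ k, (star (w k) ⬝ᵥ w k).re) :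
    ∀ k, ∃ φ : ℝ, v k = Complex.exp ((φ : ℂ) * Complex.I) • v' k := by
  choose φ hφ using fun k => exists_phase_norm_add_eq (star (a k) ⬝ᵥ v k) (star (a k) ⬝ᵥ v' k)
  set u : Fin K → ℂ := fun k => Complex.exp (φ k * Complex.I)
  have hu : ∀ k, ‖u k‖ = 1 := fun k => Complex.norm_exp_ofReal_mul_I (φ k)
  set w := fun k => (2⁻¹ : ℂ) • (v k + u k • v' k)
  have hw : Feas w := (hFeas w).mpr <| SINRFeasible.midpoint (fun k => (hγ k).le)
    (fun k => (hc k).le) ((hFeas v).mp hv) ((hFeas v').mp hv') hu hφ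
  have henergy : ∑ k, (star (w k) ⬝ᵥ w k).re
      = (∑ k, (star (v k) ⬝ᵥ v k).re + ∑ k, (star (v' k) ⬝ᵥ v' k).re) / 2
        - (∑ k, (star (v k - u k • v' k) ⬝ᵥ (v k - u k • v' k)).re) / 4 := by
    simp only [w, star_dotProduct_midpoint _ _ (hu _), Complex.sub_re, Complex.div_ofNat_re,
      Complex.add_re, Finset.sum_sub_distrib, ← Finset.sum_div, Finset.sum_add_distrib]
  have hgap : ∑ k, (star (v k - u k • v' k) ⬝ᵥ (v k - u k • v' k)).re ≤ 0 := by
    linarith [hopt w hw, hopt' v hv]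
  have hzero := (Finset.sum_eq_zero_iff_of_nonneg fun k _ => re_star_dotProduct_self_nonneg _).mp
    (hgap.antisymm (Finset.sum_nonneg fun k _ => re_star_dotProduct_self_nonneg _))
  exact fun k =>
    ⟨φ k, sub_eq_zero.mp (re_star_dotProduct_self_eq_zero (hzero k (Finset.mem_univ k)))⟩
end

section
/- Let λ be a KKT multiplier vector for the single-stream QoS-constrained power minimization problem: suppose (u, v, λ) satisfies the stationarity condition (I - (λ_k/γ_k) H_k^H u_k u_k^H H_k + Σ_{j≠k} λ_j H_j^H u_j u_j^H H_j) v_k = 0 for all k, with λ_k ≥ 0, γ_k > 0 and v_k ≠ 0 for all k. Then λ_k > 0 for all k. -/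
/-! If `λ k = 0`, the stationarity matrix of user `k` becomes `1 + ∑_{j ≠ k} λ j • H jᴴ u j u jᴴ H j`,
the identity plus a positive semidefinite matrix. It is therefore positive definite, so it cannot
annihilate the nonzero vector `v k`. -/

open Matrix ComplexOrder

namespace Matrix

variable {m n R : Type*} [Fintype m] [Fintype n]

theorem PosDef.eq_zero_of_mulVec_eq_zero [Ring R] [PartialOrder R] [StarRing R]
    {A : Matrix n n R} (hA : A.PosDef) {x : n → R} (hx : A *ᵥ x = 0) : x = 0 := by
  by_contra hx0
  simpa [hx] using hA.dotProduct_mulVec_pos hx0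

theorem posSemidef_conjTranspose_mul_vecMulVec_mul [CommRing R] [PartialOrder R] [StarRing R]
    [StarOrderedRing R] (B : Matrix m n R) (w : m → R) :
    (Bᴴ * vecMulVec w (star w) * B).PosSemidef :=
  (posSemidef_vecMulVec_self_star w).conjTranspose_mul_mul_same B

theorem posDef_one_add_sum_smul_conjTranspose_mul_vecMulVec_mul {ι : Type*} [DecidableEq n]
    {dim : ι → Type*} [∀ j, Fintype (dim j)] (s : Finset ι) (c : ι → ℝ) (hc : ∀ j ∈ s, 0 ≤ c j)
    (B : ∀ j, Matrix (dim j) n ℂ) (w : ∀ j, dim j → ℂ) :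
    (1 + ∑ j ∈ s, ((c j : ℝ) : ℂ) • ((B j)ᴴ * vecMulVec (w j) (star (w j)) * B j)).PosDef :=
  PosDef.one.add_posSemidef <| posSemidef_sum s fun j hj =>
    (posSemidef_conjTranspose_mul_vecMulVec_mul (B j) (w j)).smul
      (Complex.zero_le_real.mpr (hc j hj))

end Matrix

theorem stmt_17_general {M K : ℕ} (N : Fin K → ℕ)
    (H : ∀ k, Matrix (Fin (N k)) (Fin M) ℂ)
    (u : ∀ k, Fin (N k) → ℂ) (v : Fin K → (Fin M → ℂ))
    (γ lam : Fin K → ℝ) (hlam : ∀ k, 0 ≤ lam k)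
    (hv : ∀ k, v k ≠ 0)
    (hstat : ∀ k,
      ((1 : Matrix (Fin M) (Fin M) ℂ)
        - ((lam k / γ k : ℝ) : ℂ) • ((H k)ᴴ * vecMulVec (u k) (star (u k)) * H k)
        + ∑ j ∈ Finset.univ.erase k,
            ((lam j : ℝ) : ℂ) • ((H j)ᴴ * vecMulVec (u j) (star (u j)) * H j)).mulVec (v k) = 0) :
    ∀ k, 0 < lam k := by
  intro k
  refine (hlam k).lt_of_ne' fun hk => hv k ?_
  have hstat_k := hstat k
  rw [hk, zero_div, Complex.ofReal_zero, zero_smul, sub_zero] at hstat_k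
  exact (posDef_one_add_sum_smul_conjTranspose_mul_vecMulVec_mul _ lam
    (fun j _ => hlam j) H u).eq_zero_of_mulVec_eq_zero hstat_k

theorem stmt_17 {M K : ℕ} (N : Fin K → ℕ)
    (H : ∀ k, Matrix (Fin (N k)) (Fin M) ℂ)
    (u : ∀ k, Fin (N k) → ℂ) (v : Fin K → (Fin M → ℂ))
    (γ lam : Fin K → ℝ) (hγ : ∀ k, 0 < γ k) (hlam : ∀ k, 0 ≤ lam k)
    (hv : ∀ k, v k ≠ 0)
    (hstat : ∀ k,
      ((1 : Matrix (Fin M) (Fin M) ℂ)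
        - ((lam k / γ k : ℝ) : ℂ) • ((H k)ᴴ * vecMulVec (u k) (star (u k)) * H k)
        + ∑ j ∈ Finset.univ.erase k,
            ((lam j : ℝ) : ℂ) • ((H j)ᴴ * vecMulVec (u j) (star (u j)) * H j)).mulVec (v k) = 0) :
    ∀ k, 0 < lam k :=
  stmt_17_general N H u v γ lam hlam hv hstat
end
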